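/- There exist a precompact Hausdorff abelian topological group G and a subset A of nonzero elements of G such that the Kalton map κ_A : S_A → ⟨A⟩ is a group isomorphism onto ⟨A⟩ and an open map onto ⟨A⟩ (with the subspace topology), but A is not topologically independent. -/

import Mathlib

open scoped DirectSum

/-- A subset `A` of a topological abelian group is *topologically independent*. -/
def TopIndep {G : Type*} [AddCommGroup G] [TopologicalSpace G] (A : Set G) : Prop :=
  (0 : G) ∉ A ∧ ∀ W ∈ nhds (0 : G), ∃ U ∈ nhds (0 : G),
    ∀ B : Finset G, ↑B ⊆ A → ∀ z : G → ℤ,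
      (∑ a ∈ B, z a • a) ∈ U → ∀ a ∈ B, z a • a ∈ W

/-- The Kalton map `κ_A : S_A = ⨁_{a ∈ A} ⟨a⟩ → G`. -/
noncomputable def kalton {G : Type*} [AddCommGroup G] (A : Set G) :
    (⨁ a : A, AddSubgroup.zmultiples a.1) →+ G :=
  letI := Classical.decEq A
  DirectSum.toAddMonoid fun a => (AddSubgroup.zmultiples a.1).subtype

/-- The topology on `S_A = ⨁_{a ∈ A} ⟨a⟩` inherited from the Tychonoff product
`∏_{a ∈ A} ⟨a⟩`. -/
def sumTop {G : Type*} [AddCommGroup G] [TopologicalSpace G] (A : Set G) :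
    TopologicalSpace (⨁ a : A, AddSubgroup.zmultiples a.1) :=
  TopologicalSpace.induced (fun x a => x a) Pi.topologicalSpace

/-!
Take `G = ℤ₂ ^ ℕ`, which is compact, and `A = {e₀ + e_{n+1} : n ∈ ℕ}`. Reading off coordinate
`n + 1` gives a continuous endomorphism of `G` fixing `e₀ + e_{n+1}` and killing the rest of `A`;
such a family of projections forces `κ_A` to be injective and open onto `⟨A⟩`. On the other hand
`(e₀ + e_{n+1}) - (e₀ + e_{n+2}) → 0` while `e₀ + e_{n+1} ↛ 0`, so `A` is not topologically
independent.
-/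

open Filter Topology

section Kalton

variable {G : Type*} [AddCommGroup G] {A : Set G}

theorem kalton_of [DecidableEq A] (a : A) (y : AddSubgroup.zmultiples a.1) :
    kalton A (DirectSum.of (fun a : A => AddSubgroup.zmultiples a.1) a y) = y := by
  rw [kalton, Subsingleton.elim (Classical.decEq A) ‹_›, DirectSum.toAddMonoid_of]
  rfl

theorem range_kalton : Set.range (kalton A) = AddSubgroup.closure A := by
  classical
  apply subset_antisymm
  · rintro _ ⟨x, rfl⟩
    induction x using DirectSum.induction_on with
    | zero => simp
    | of a y =>
      obtain ⟨z, hz⟩ := y.2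
      rw [kalton_of, ← hz]
      exact AddSubgroup.zsmul_mem _ (AddSubgroup.subset_closure a.2) z
    | add x y hx hy =>
      rw [map_add]
      exact add_mem hx hy
  · refine (AddSubgroup.closure_le (kalton A).range).2 fun a ha => ?_
    exact ⟨DirectSum.of _ ⟨a, ha⟩ ⟨a, AddSubgroup.mem_zmultiples a⟩, kalton_of _ _⟩

variable {π : A → G →+ G} (hπ_self : ∀ a : A, π a a = a)
  (hπ_ne : ∀ a b : A, a ≠ b → π a b = 0)
include hπ_self hπ_ne

theorem apply_kalton_of_proj (a : A) (x : ⨁ a : A, AddSubgroup.zmultiples a.1) :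
    π a (kalton A x) = x a := by
  classical
  induction x using DirectSum.induction_on with
  | zero => simp
  | of b y =>
    obtain ⟨z, hz⟩ := y.2
    rw [kalton_of, ← hz]
    rcases eq_or_ne a b with rfl | hab
    · simpa [hπ_self] using hz
    · rw [DirectSum.of_eq_of_ne _ _ _ hab]
      simp [hπ_ne a b hab]
  | add x y hx hy => simp [hx, hy]

theorem kalton_injective_of_proj : Function.Injective (kalton A) := by
  refine (injective_iff_map_eq_zero _).2 fun x hx => DFinsupp.ext fun a => Subtype.ext ?_
  rw [← apply_kalton_of_proj hπ_self hπ_ne, hx, map_zero]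
  rfl

theorem exists_isOpen_image_kalton_of_proj [TopologicalSpace G]
    (hπ_cont : ∀ a, Continuous (π a)) (U : Set (⨁ a : A, AddSubgroup.zmultiples a.1))
    (hU : IsOpen[sumTop A] U) :
    ∃ V : Set G, IsOpen V ∧ kalton A '' U = V ∩ AddSubgroup.closure A := by
  obtain ⟨O, hO, rfl⟩ := isOpen_induced_iff.1 hU
  obtain ⟨O', hO', rfl⟩ := (IsInducing.piMap fun _ => IsInducing.subtypeVal).isOpen_iff.1 hO
  refine ⟨(fun g a => π a g) ⁻¹' O', hO'.preimage (continuous_pi hπ_cont), ?_⟩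
  rw [← range_kalton, ← Set.image_preimage_eq_inter_range]
  congr 1
  ext x
  simp only [Set.mem_preimage, apply_kalton_of_proj hπ_self hπ_ne]
  rfl

end Kalton

theorem not_topIndep_of_tendsto_sub {G : Type*} [AddCommGroup G] [TopologicalSpace G] {A : Set G}
    {u w : ℕ → G} (hu : ∀ n, u n ∈ A) (hw : ∀ n, w n ∈ A) (huw : ∀ n, u n ≠ w n)
    (hlim : Tendsto (fun n => u n - w n) atTop (𝓝 0)) (hu_lim : ¬ Tendsto u atTop (𝓝 0)) :
    ¬ TopIndep A := by
  classical
  rintro ⟨-, hind⟩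
  obtain ⟨W, hW, hfreq⟩ := not_tendsto_iff_exists_frequently_notMem.1 hu_lim
  obtain ⟨U, hU, hUW⟩ := hind W hW
  obtain ⟨n, hnW, hnU⟩ := (hfreq.and_eventually (hlim.eventually_mem hU)).exists
  let z : G → ℤ := fun g => if g = u n then 1 else -1
  have hsum : ∑ g ∈ {u n, w n}, z g • g = u n - w n := by
    simp [z, Finset.sum_pair (huw n), (huw n).symm, sub_eq_add_neg]
  have hB : (↑({u n, w n} : Finset G) : Set G) ⊆ A := by
    simp [Set.insert_subset_iff, hu n, hw n]
  exact hnW (by simpa [z] using hUW {u n, w n} hB z (hsum ▸ hnU) (u n) (by simp))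

section PairSingle

variable {K : Type*} [AddCommGroup K]

def pairSingle (n : ℕ) : K →+ (ℕ → K) :=
  AddMonoidHom.single (fun _ => K) 0 + AddMonoidHom.single (fun _ => K) (n + 1)

theorem pairSingle_apply_zero (n : ℕ) (t : K) : pairSingle n t 0 = t := by
  simp [pairSingle]

theorem pairSingle_apply_succ (n m : ℕ) (t : K) :
    pairSingle n t (m + 1) = if m = n then t else 0 := by
  simp [pairSingle, Pi.single_apply]

theorem pairSingle_sub_pairSingle (m n : ℕ) (t : K) :
    pairSingle m t - pairSingle n t = Pi.single (m + 1) t - Pi.single (n + 1) t := by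
  simp [pairSingle]

theorem pairSingle_ne_zero {c : K} (hc : c ≠ 0) (n : ℕ) : pairSingle n c ≠ 0 :=
  fun h => hc (by simpa [pairSingle_apply_zero] using congrFun h 0)

theorem pairSingle_injective {c : K} (hc : c ≠ 0) :
    Function.Injective fun n => pairSingle n c := by
  intro m n h
  by_contra hmn
  simpa [pairSingle_apply_succ, hmn, hc] using congrFun h (m + 1)

def pairProj (n : ℕ) : (ℕ → K) →+ (ℕ → K) :=
  (pairSingle n).comp (Pi.evalAddMonoidHom (fun _ => K) (n + 1))

theorem pairProj_pairSingle (n m : ℕ) (t : K) :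
    pairProj n (pairSingle m t) = if n = m then pairSingle m t else 0 := by
  simp only [pairProj, AddMonoidHom.comp_apply, Pi.evalAddMonoidHom_apply, pairSingle_apply_succ]
  split_ifs with h
  · rw [h]
  · exact map_zero _

theorem continuous_pairProj [TopologicalSpace K] [ContinuousAdd K] (n : ℕ) :
    Continuous (pairProj (K := K) n) :=
  ((continuous_single (A := fun _ : ℕ => K) 0).add
    (continuous_single (A := fun _ : ℕ => K) (n + 1))).comp (continuous_apply (n + 1))

theorem tendsto_single_atTop_nhds_zero [TopologicalSpace K] (c : K) :
    Tendsto (fun n => (Pi.single n c : ℕ → K)) atTop (𝓝 0) :=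
  tendsto_pi_nhds.2 fun i => tendsto_const_nhds.congr' <|
    (eventually_gt_atTop i).mono fun n hn => by simp [hn.ne']

variable (c : K)

def pairSet : Set (ℕ → K) := Set.range fun n => pairSingle n c

noncomputable def pairSetProj (a : pairSet c) : (ℕ → K) →+ (ℕ → K) :=
  pairProj (Set.rangeSplitting _ a)

theorem pairSetProj_self (a : pairSet c) : pairSetProj c a a = a := by
  rw [pairSetProj, ← Set.apply_rangeSplitting _ a, pairProj_pairSingle, if_pos rfl]

theorem pairSetProj_of_ne (a b : pairSet c) (hab : a ≠ b) : pairSetProj c a b = 0 := by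
  rw [pairSetProj, ← Set.apply_rangeSplitting _ b, pairProj_pairSingle, if_neg]
  rintro h
  apply hab
  rw [Subtype.ext_iff, ← Set.apply_rangeSplitting _ a, ← Set.apply_rangeSplitting _ b, h]

variable {c} in
theorem not_topIndep_pairSet [TopologicalSpace K] [IsTopologicalAddGroup K] [T1Space K]
    (hc : c ≠ 0) : ¬ TopIndep (pairSet c) := by
  refine not_topIndep_of_tendsto_sub (u := fun n => pairSingle n c)
    (w := fun n => pairSingle (n + 1) c) (fun n => ⟨n, rfl⟩) (fun n => ⟨n + 1, rfl⟩)
    (fun n => (pairSingle_injective hc).ne n.succ_ne_self.symm) ?_ ?_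
  · have h := ((tendsto_single_atTop_nhds_zero c).comp (tendsto_add_atTop_nat 1)).sub
      ((tendsto_single_atTop_nhds_zero c).comp (tendsto_add_atTop_nat 2))
    simpa [pairSingle_sub_pairSingle, Function.comp_def] using h
  · intro h
    have := (continuous_apply 0).tendsto _ |>.comp h
    simp only [Function.comp_def, pairSingle_apply_zero, Pi.zero_apply,
      tendsto_const_nhds_iff] at this
    exact hc this

end PairSingle

/-- **Example**: there is a precompact Hausdorff abelian topological group `G` and a set `A` of
nonzero elements of `G` such that the Kalton map `κ_A : S_A → ⟨A⟩` is a group isomorphism onto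
`⟨A⟩` and an open map onto `⟨A⟩` (with the subspace topology), but `A` is not topologically
independent. -/
theorem exists_open_iso_kalton_not_topIndep :
    ∃ (G : Type) (_ : AddCommGroup G) (_ : UniformSpace G),
      IsUniformAddGroup G ∧ T2Space G ∧ TotallyBounded (Set.univ : Set G) ∧
      ∃ A : Set G, (∀ a ∈ A, a ≠ 0) ∧
        Function.Injective (kalton A) ∧
        Set.range (kalton A) = (AddSubgroup.closure A : Set G) ∧
        (∀ U : Set (⨁ a : A, AddSubgroup.zmultiples a.1), @IsOpen _ (sumTop A) U →
          ∃ V : Set G, IsOpen V ∧ (kalton A) '' U = V ∩ (AddSubgroup.closure A : Set G)) ∧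
        ¬ TopIndep A := by
  refine ⟨ℕ → ℤ_[2], inferInstance, inferInstance, inferInstance, inferInstance,
    isCompact_univ.totallyBounded, pairSet 1, ?_,
    kalton_injective_of_proj (pairSetProj_self 1) (pairSetProj_of_ne 1), range_kalton,
    exists_isOpen_image_kalton_of_proj (pairSetProj_self 1) (pairSetProj_of_ne 1)
      fun _ => continuous_pairProj _,
    not_topIndep_pairSet one_ne_zero⟩
  rintro _ ⟨n, rfl⟩
  exact pairSingle_ne_zero one_ne_zero n
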